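/- Soundness of greedy weight-conflict learning: let S be a set of literals over distinct variables such that w(S) · I_max(S) < θ, where w(S) = ∏_{ℓ∈S} w(ℓ) and I_max(S) = ∏_{A ∉ vars(S)} best(A). Let C_w be the clause ⋁_{ℓ∈S} ¬ℓ. Then every total assignment η with w(η) ≥ θ satisfies C_w, i.e., η falsifies at least one literal of S. -/

import Mathlib

open Finset

lemma Bool.apply_le_max_apply_true_false {α : Type*} [LinearOrder α] (f : Bool → α) (b : Bool) :
    f b ≤ max (f true) (f false) := by
  cases b
  · exact le_max_right _ _
  · exact le_max_left _ _

lemma prod_le_prod_mul_prod_compl_max {V R : Type*} [Fintype V] [DecidableEq V]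
    [CommSemiring R] [LinearOrder R] [IsOrderedRing R]
    (w : V → Bool → R) (hw : ∀ v b, 0 ≤ w v b) (T : Finset V) (σ η : V → Bool)
    (hησ : ∀ v ∈ T, η v = σ v) :
    ∏ v, w v (η v) ≤ (∏ v ∈ T, w v (σ v)) * ∏ v ∈ Tᶜ, max (w v true) (w v false) := by
  rw [← prod_mul_prod_compl T, prod_congr rfl fun v hv => congrArg (w v) (hησ v hv)]
  gcongr with v
  · exact prod_nonneg fun v _ => hw v _
  · exact fun v _ => hw v _
  · exact Bool.apply_le_max_apply_true_false (w v) (η v)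

/-- Soundness of greedy weight-conflict learning: if w(S)·I_max(S) < θ, then
every total assignment η with w(η) ≥ θ satisfies the conflict clause
C_w = ⋁_{ℓ∈S} ¬ℓ, i.e. η falsifies some literal of S. -/
theorem greedy_conflict_clause_sound {V : Type*} [Fintype V] [DecidableEq V]
    (w : V → Bool → ℝ) (hw : ∀ v b, 0 < w v b)
    (T : Finset V) (σ : V → Bool) (θ : ℝ)
    (hbound : (∏ v ∈ T, w v (σ v)) * (∏ v ∈ Tᶜ, max (w v true) (w v false)) < θ)
    (η : V → Bool) (hη : θ ≤ ∏ v, w v (η v)) :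
    ∃ v ∈ T, η v ≠ σ v := by
  by_contra! hησ
  exact (hbound.trans_le hη).not_ge
    (prod_le_prod_mul_prod_compl_max w (fun v b => (hw v b).le) T σ η hησ)
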